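/- For any leader strategy S ⊆ L in the pairwise (K=2) Stackelberg KEP game, there exists a strategy S* ⊆ L with G[S*] admitting a perfect matching such that w(G[S*]) + w^L(G[V\S*]) ≥ w(G[S]) + w^L(G[V\S]). -/

import Mathlib

variable {V : Type*} [Fintype V] [DecidableEq V]

/-- A matching of `G` all of whose edges lie inside the vertex set `W`
(i.e. a matching of the induced subgraph `G[W]`). -/
def IsMatchingOn (G : SimpleGraph V) (W : Set V) (M : Finset (Sym2 V)) : Prop :=
  (∀ e ∈ M, e ∈ G.edgeSet) ∧ (∀ e ∈ M, ∀ v ∈ e, v ∈ W) ∧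
  (M : Set (Sym2 V)).Pairwise fun e f => ∀ v, v ∈ e → v ∉ f

/-- Vertices covered by a set of edges. -/
def mcovered (M : Finset (Sym2 V)) : Set V := {v | ∃ e ∈ M, v ∈ e}

/-- `w(G[W])`: maximum cardinality of a matching of `G[W]`. -/
noncomputable def mmax (G : SimpleGraph V) (W : Set V) : ℕ :=
  sSup {n | ∃ M, IsMatchingOn G W M ∧ M.card = n}

/-- `w^L(G[W])`: minimum number of `L`-vertices covered over maximum matchings of `G[W]`. -/
noncomputable def mwL (G : SimpleGraph V) (L W : Set V) : ℕ :=
  sInf {k | ∃ M, IsMatchingOn G W M ∧ M.card = mmax G W ∧ (mcovered M ∩ L).ncard = k}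

/-!
Let `S*` be the set of vertices covered by a maximum matching of `G[S]`: then `w(G[S*]) = w(G[S])`,
and the pool `V \ S*` is `V \ S` enlarged by leader vertices. So it suffices that adding a vertex
`u ∈ L \ W` to the pool `W` cannot decrease `w^L`. Let `N` be a maximum matching of
`G[W ∪ {u}]` covering as few leader vertices as possible and `P` a maximum matching of `G[W]`.
If `u` raises the matching number, `N` minus its edge at `u` is a maximum matching of `G[W]`.
Otherwise `P` is also maximum for `W ∪ {u}`, and flipping `N` along the alternating path from `u`
gives a maximum matching of `G[W]` that trades `u` for at most one other vertex.
-/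

section Matching

variable {α : Type*} {G : SimpleGraph α} {W U : Set α} {M N P : Finset (Sym2 α)}

theorem mcovered_mono (h : M ⊆ N) : mcovered M ⊆ mcovered N :=
  fun _ ⟨e, he, hv⟩ => ⟨e, h he, hv⟩

theorem mcovered_insert_mk [DecidableEq α] (a b : α) (M : Finset (Sym2 α)) :
    mcovered (insert s(a, b) M) = insert a (insert b (mcovered M)) := by
  ext v
  simp [mcovered, or_assoc]

theorem IsMatchingOn.mcovered_subset (h : IsMatchingOn G W M) : mcovered M ⊆ W :=
  fun v ⟨e, he, hv⟩ => h.2.1 e he v hv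

theorem IsMatchingOn.of_mcovered_subset (h : IsMatchingOn G U M) (hW : mcovered M ⊆ W) :
    IsMatchingOn G W M :=
  ⟨h.1, fun e he _ hv => hW ⟨e, he, hv⟩, h.2.2⟩

theorem IsMatchingOn.mono (h : IsMatchingOn G U M) (hUW : U ⊆ W) : IsMatchingOn G W M :=
  h.of_mcovered_subset (h.mcovered_subset.trans hUW)

theorem IsMatchingOn.subset (h : IsMatchingOn G W N) (hMN : M ⊆ N) : IsMatchingOn G W M :=
  ⟨fun e he => h.1 e (hMN he), fun e he => h.2.1 e (hMN he),
    h.2.2.mono (Finset.coe_subset.2 hMN)⟩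

theorem IsMatchingOn.eq_of_mem {e f : Sym2 α} {v : α} (h : IsMatchingOn G W M)
    (he : e ∈ M) (hf : f ∈ M) (hve : v ∈ e) (hvf : v ∈ f) : e = f := by
  by_contra hef
  exact h.2.2 he hf hef v hve hvf

theorem IsMatchingOn.adj {a b : α} (h : IsMatchingOn G W M) (hab : s(a, b) ∈ M) : G.Adj a b :=
  h.1 _ hab

theorem IsMatchingOn.insert_mk [DecidableEq α] {a b : α} (h : IsMatchingOn G W M)
    (hab : G.Adj a b) (ha : a ∈ W) (hb : b ∈ W) (haM : a ∉ mcovered M)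
    (hbM : b ∉ mcovered M) :
    IsMatchingOn G W (insert s(a, b) M) := by
  refine ⟨?_, ?_, ?_⟩
  · simpa [Finset.forall_mem_insert] using ⟨hab, h.1⟩
  · simpa [Finset.forall_mem_insert] using ⟨⟨ha, hb⟩, h.2.1⟩
  · rw [Finset.coe_insert, Set.pairwise_insert]
    refine ⟨h.2.2, fun f hf _ => ⟨fun v hv hvf => ?_, fun v hvf hv => ?_⟩⟩ <;>
    · rcases Sym2.mem_iff.1 hv with rfl | rfl
      exacts [haM ⟨f, hf, hvf⟩, hbM ⟨f, hf, hvf⟩]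

theorem card_insert_mk [DecidableEq α] {a : α} (b : α) (haM : a ∉ mcovered M) :
    (insert s(a, b) M).card = M.card + 1 :=
  Finset.card_insert_of_notMem fun hab => haM ⟨_, hab, Sym2.mem_mk_left a b⟩

theorem IsMatchingOn.mcovered_erase_mk [DecidableEq α] {a b : α} (h : IsMatchingOn G W M)
    (hab : s(a, b) ∈ M) : mcovered (M.erase s(a, b)) ⊆ mcovered M \ {a, b} := by
  rintro v ⟨e, he, hve⟩
  refine ⟨⟨e, Finset.mem_of_mem_erase he, hve⟩, fun hv => Finset.ne_of_mem_erase he ?_⟩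
  exact h.eq_of_mem (Finset.mem_of_mem_erase he) hab hve (by simpa using hv)

theorem IsMatchingOn.card_le_card_filter_notMem_add_one [DecidableEq α]
    (h : IsMatchingOn G W M) (u : α) : M.card ≤ (M.filter (u ∉ ·)).card + 1 := by
  have hu : (M.filter (u ∈ ·)).card ≤ 1 := Finset.card_le_one.2 fun e he f hf =>
    h.eq_of_mem (Finset.mem_of_mem_filter e he) (Finset.mem_of_mem_filter f hf)
      (Finset.mem_filter.1 he).2 (Finset.mem_filter.1 hf).2
  have := Finset.card_filter_add_card_filter_not (s := M) (u ∈ ·)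
  omega

theorem IsMatchingOn.filter_notMem [DecidableEq α] {u : α} (h : IsMatchingOn G (insert u W) M) :
    IsMatchingOn G W (M.filter (u ∉ ·)) := by
  refine (h.subset (Finset.filter_subset _ _)).of_mcovered_subset ?_
  rintro v ⟨e, he, hve⟩
  rw [Finset.mem_filter] at he
  exact (h.2.1 e he.1 v hve).resolve_left fun hvu => he.2 (hvu ▸ hve)

theorem IsMatchingOn.erase_mk [DecidableEq α] {a b : α} (h : IsMatchingOn G W M)
    (hab : s(a, b) ∈ M) : IsMatchingOn G (W \ {a, b}) (M.erase s(a, b)) :=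
  (h.subset (Finset.erase_subset _ _)).of_mcovered_subset <|
    (h.mcovered_erase_mk hab).trans (Set.sdiff_subset_sdiff_left h.mcovered_subset)

theorem IsMatchingOn.insert_mk_of_sdiff [DecidableEq α] {a b : α}
    (h : IsMatchingOn G (W \ {a, b}) M) (hab : G.Adj a b) (ha : a ∈ W) (hb : b ∈ W) :
    IsMatchingOn G W (insert s(a, b) M) ∧ (insert s(a, b) M).card = M.card + 1 := by
  have haM : a ∉ mcovered M := fun h' => (h.mcovered_subset h').2 (by simp)
  have hbM : b ∉ mcovered M := fun h' => (h.mcovered_subset h').2 (by simp)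
  exact ⟨(h.mono Set.sdiff_subset).insert_mk hab ha hb haM hbM, card_insert_mk b haM⟩

/-- `Q` is `N` flipped along the alternating path of `N ∪ P` starting at `u`; as `P` is maximum,
this path ends with an edge of `P`, at the vertex `z`. The recursion strips the first two edges
`uv ∈ N`, `vx ∈ P` of the path and restarts at `x` inside `U \ {u, v}`, where `P` minus `vx` is
still maximum. -/
theorem IsMatchingOn.exists_swap_avoiding [DecidableEq α] {u : α}
    (hN : IsMatchingOn G U N) (hP : IsMatchingOn G U P)
    (hPmax : ∀ Q, IsMatchingOn G U Q → Q.card ≤ P.card) (huP : u ∉ mcovered P) :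
    ∃ Q z, IsMatchingOn G U Q ∧ Q.card = N.card ∧ u ∉ mcovered Q ∧
      insert u (mcovered Q) ⊆ insert z (mcovered N) := by
  induction P using Finset.strongInduction generalizing U N u with
  | H P ih =>
  by_cases huN : u ∈ mcovered N
  swap
  · exact ⟨N, u, hN, rfl, huN, subset_rfl⟩
  obtain ⟨_, huvN, hue⟩ := huN
  obtain ⟨v, rfl⟩ := Sym2.mem_iff_exists.1 hue
  have huU : u ∈ U := hN.2.1 _ huvN u hue
  have hvU : v ∈ U := hN.2.1 _ huvN v (Sym2.mem_mk_right u v)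
  have hvP : v ∈ mcovered P := by
    by_contra hvP
    have := hPmax _ (hP.insert_mk (hN.adj huvN) huU hvU huP hvP)
    rw [card_insert_mk v huP] at this
    omega
  obtain ⟨_, hvxP, hvf⟩ := hvP
  obtain ⟨x, rfl⟩ := Sym2.mem_iff_exists.1 hvf
  have hPu : IsMatchingOn G (U \ {u}) P :=
    hP.of_mcovered_subset fun w hw => ⟨hP.mcovered_subset hw, fun hwu => huP (hwu ▸ hw)⟩
  have hP₁ : IsMatchingOn G (U \ {u, v}) (P.erase s(v, x)) :=
    (hPu.erase_mk hvxP).mono fun w hw =>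
      ⟨hw.1.1, by rintro (rfl | rfl); exacts [hw.1.2 rfl, hw.2 (.inl rfl)]⟩
  have hP₁max : ∀ Q, IsMatchingOn G (U \ {u, v}) Q → Q.card ≤ (P.erase s(v, x)).card := by
    intro Q hQ
    obtain ⟨hQ', hQ'card⟩ := hQ.insert_mk_of_sdiff (hN.adj huvN) huU hvU
    have := Finset.card_erase_add_one hvxP
    have := hPmax _ hQ'
    omega
  have hxP₁ : x ∉ mcovered (P.erase s(v, x)) :=
    fun h => (hP.mcovered_erase_mk hvxP h).2 (by simp)
  obtain ⟨Q₁, z, hQ₁, hQ₁card, hxQ₁, hQ₁N⟩ :=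
    ih _ (Finset.erase_ssubset hvxP) (hN.erase_mk huvN) hP₁ hP₁max hxP₁
  have hvQ₁ : v ∉ mcovered Q₁ := fun h => (hQ₁.mcovered_subset h).2 (by simp)
  have huQ₁ : u ∉ mcovered Q₁ := fun h => (hQ₁.mcovered_subset h).2 (by simp)
  have hxU : x ∈ U := hP.2.1 _ hvxP x (Sym2.mem_mk_right v x)
  have hux : u ≠ x := fun hux => huP ⟨_, hvxP, hux ▸ Sym2.mem_mk_right v x⟩
  refine ⟨insert s(v, x) Q₁, z,
    (hQ₁.mono Set.sdiff_subset).insert_mk (hP.adj hvxP) hvU hxU hvQ₁ hxQ₁, ?_, ?_, ?_⟩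
  · rw [card_insert_mk x hvQ₁, hQ₁card, Finset.card_erase_add_one huvN]
  · simp [mcovered_insert_mk, (hN.adj huvN).ne, hux, huQ₁]
  · have hN₁N : mcovered (N.erase s(u, v)) ⊆ mcovered N :=
      mcovered_mono (Finset.erase_subset _ _)
    rw [mcovered_insert_mk]
    have hvN : v ∈ mcovered N := ⟨_, huvN, Sym2.mem_mk_right u v⟩
    exact Set.insert_subset_iff.2 ⟨.inr ⟨_, huvN, hue⟩,
      Set.insert_subset_iff.2 ⟨.inr hvN, hQ₁N.trans (Set.insert_subset_insert hN₁N)⟩⟩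

end Matching

theorem Set.ncard_inter_le_of_insert_subset_insert {α : Type*} {s t L : Set α} {u z : α}
    (ht : t.Finite) (hu : u ∈ L) (hus : u ∉ s) (h : insert u s ⊆ insert z t) :
    (s ∩ L).ncard ≤ (t ∩ L).ncard := by
  have hs : s.Finite := ((ht.insert z).subset h).subset (Set.subset_insert u s)
  have hsub : insert u (s ∩ L) ⊆ insert z (t ∩ L) := by
    rw [← Set.insert_inter_of_mem hu, Set.insert_inter_distrib]
    exact Set.inter_subset_inter h (Set.subset_insert z L)
  have := Set.ncard_le_ncard hsub ((ht.inter_of_left L).insert z)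
  rw [Set.ncard_insert_of_notMem (fun h => hus h.1) (hs.inter_of_left L)] at this
  have := Set.ncard_insert_le z (t ∩ L)
  omega

section MatchingNumber

variable {α : Type*} {G : SimpleGraph α} {L W : Set α} {M : Finset (Sym2 α)}

theorem bddAbove_matchingCards [Fintype α] (G : SimpleGraph α) (W : Set α) :
    BddAbove {n | ∃ M, IsMatchingOn G W M ∧ M.card = n} :=
  ⟨Fintype.card (Sym2 α), fun _ ⟨M, _, hM⟩ => hM ▸ M.card_le_univ⟩

theorem IsMatchingOn.card_le_mmax [Fintype α] (h : IsMatchingOn G W M) : M.card ≤ mmax G W :=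
  le_csSup (bddAbove_matchingCards G W) ⟨M, h, rfl⟩

theorem exists_isMatchingOn_card_eq_mmax [Fintype α] (G : SimpleGraph α) (W : Set α) :
    ∃ M, IsMatchingOn G W M ∧ M.card = mmax G W := by
  have hempty : IsMatchingOn G W ∅ := ⟨by simp, by simp, by simp⟩
  exact Nat.sSup_mem (s := {n | ∃ M, IsMatchingOn G W M ∧ M.card = n}) ⟨0, ∅, hempty, rfl⟩
    (bddAbove_matchingCards G W)

theorem exists_isMatchingOn_ncard_eq_mwL [Fintype α] (G : SimpleGraph α) (L W : Set α) :
    ∃ M, IsMatchingOn G W M ∧ M.card = mmax G W ∧ (mcovered M ∩ L).ncard = mwL G L W := by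
  obtain ⟨M, hM, hMcard⟩ := exists_isMatchingOn_card_eq_mmax G W
  exact Nat.sInf_mem
    (s := {k | ∃ M, IsMatchingOn G W M ∧ M.card = mmax G W ∧ (mcovered M ∩ L).ncard = k})
    ⟨_, M, hM, hMcard, rfl⟩

theorem IsMatchingOn.mwL_le (h : IsMatchingOn G W M) (hM : M.card = mmax G W) :
    mwL G L W ≤ (mcovered M ∩ L).ncard :=
  Nat.sInf_le ⟨M, h, hM, rfl⟩

variable [Fintype α] [DecidableEq α]

theorem mwL_le_mwL_insert {u : α} (hu : u ∈ L) : mwL G L W ≤ mwL G L (insert u W) := by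
  by_cases huW : u ∈ W
  · rw [Set.insert_eq_of_mem huW]
  obtain ⟨N, hN, hNcard, hNL⟩ := exists_isMatchingOn_ncard_eq_mwL G L (insert u W)
  obtain ⟨P, hP, hPcard⟩ := exists_isMatchingOn_card_eq_mmax G W
  have hPu := hP.mono (Set.subset_insert u W)
  rcases hPu.card_le_mmax.lt_or_eq with hlt | heq
  · have hN' := hN.filter_notMem
    have := hN.card_le_card_filter_notMem_add_one u
    have hN'card : (N.filter (u ∉ ·)).card = mmax G W := le_antisymm hN'.card_le_mmax (by omega)
    calc mwL G L W ≤ (mcovered (N.filter (u ∉ ·)) ∩ L).ncard := hN'.mwL_le hN'card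
      _ ≤ (mcovered N ∩ L).ncard := Set.ncard_le_ncard
          (Set.inter_subset_inter_left L (mcovered_mono (Finset.filter_subset _ _)))
      _ = mwL G L (insert u W) := hNL
  · obtain ⟨Q, z, hQ, hQcard, huQ, hQN⟩ := hN.exists_swap_avoiding hPu
      (fun Q hQ => heq ▸ hQ.card_le_mmax) (fun h => huW (hP.mcovered_subset h))
    have hQW : IsMatchingOn G W Q := hQ.of_mcovered_subset fun v hv =>
      (hQ.mcovered_subset hv).resolve_left fun hvu => huQ (hvu ▸ hv)
    calc mwL G L W ≤ (mcovered Q ∩ L).ncard := hQW.mwL_le (by omega)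
      _ ≤ (mcovered N ∩ L).ncard :=
          Set.ncard_inter_le_of_insert_subset_insert (Set.toFinite _) hu huQ hQN
      _ = mwL G L (insert u W) := hNL

theorem mwL_le_mwL_union {D : Set α} (hD : D ⊆ L) : mwL G L W ≤ mwL G L (W ∪ D) := by
  induction D, Set.toFinite D using Set.Finite.induction_on with
  | empty => simp
  | insert _ _ ih =>
    rw [Set.insert_subset_iff] at hD
    rw [Set.union_insert]
    exact (ih hD.2).trans (mwL_le_mwL_insert hD.1)

theorem mwL_mono {W' : Set α} (hW : W ⊆ W') (hL : W' \ W ⊆ L) : mwL G L W ≤ mwL G L W' := by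
  simpa [Set.union_sdiff_cancel hW] using mwL_le_mwL_union (W := W) hL

end MatchingNumber

theorem stmt17_general (G : SimpleGraph V) (L : Set V)
    (S : Set V) (hS : S ⊆ L) :
    ∃ Sstar : Set V, Sstar ⊆ L ∧
      (∃ M, IsMatchingOn G Sstar M ∧ ∀ v ∈ Sstar, v ∈ mcovered M) ∧
      mmax G S + mwL G L Sᶜ ≤ mmax G Sstar + mwL G L Sstarᶜ := by
  obtain ⟨M, hM, hMcard⟩ := exists_isMatchingOn_card_eq_mmax G S
  have hMS := hM.mcovered_subset
  have hM' : IsMatchingOn G (mcovered M) M := hM.of_mcovered_subset subset_rfl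
  refine ⟨mcovered M, hMS.trans hS, ⟨M, hM', fun _ hv => hv⟩, Nat.add_le_add ?_ ?_⟩
  · exact hMcard ▸ hM'.card_le_mmax
  · exact mwL_mono (Set.compl_subset_compl.2 hMS) fun v hv => hS (not_not.1 hv.2)

/-- for any leader strategy `S ⊆ L` there is a strategy `S*` on which the
leader has a perfect (internal) matching and whose guaranteed value is at least as large. -/
theorem stmt17 (G : SimpleGraph V) (L F : Set V)
    (hpart : L ∪ F = Set.univ) (hdisj : Disjoint L F)
    (S : Set V) (hS : S ⊆ L) :
    ∃ Sstar : Set V, Sstar ⊆ L ∧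
      (∃ M, IsMatchingOn G Sstar M ∧ ∀ v ∈ Sstar, v ∈ mcovered M) ∧
      mmax G S + mwL G L Sᶜ ≤ mmax G Sstar + mwL G L Sstarᶜ :=
  stmt17_general G L S hS
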